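/- arXiv:1806.11443 — 2 statements merged into one kernel-verified Lean document; each statement's English description precedes it below -/
import Mathlib

section
/- Γ̃(R) = Γ(R) (i.e., the two graphs on Z(R)* have the same edge set) if and only if Γ̃(T(R)) = Γ(T(R)). -/
/-- x is a zero-divisor (including 0 in a nontrivial ring). -/
def IsZD {R : Type} [CommRing R] (x : R) : Prop := ∃ y : R, y ≠ 0 ∧ x * y = 0

/-- Adjacency relation of the graph Γ̃(R): xy = 0 or x + y ∈ Z(R). -/
def GTAdj {R : Type} [CommRing R] (x y : R) : Prop := x * y = 0 ∨ IsZD (x + y)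

/-- Γ̃(R) is a complete graph: any two distinct nonzero zero-divisors are adjacent. -/
def GTComplete (R : Type) [CommRing R] : Prop :=
  ∀ x y : R, IsZD x → x ≠ 0 → IsZD y → y ≠ 0 → x ≠ y → GTAdj x y

/-- Γ̃(R) = Γ(R): distinct nonzero zero-divisors are adjacent in Γ̃(R) iff
they are adjacent in the zero-divisor graph Γ(R). -/
def TildeEqGamma (R : Type) [CommRing R] : Prop :=
  ∀ x y : R, IsZD x → x ≠ 0 → IsZD y → y ≠ 0 → x ≠ y →
    ((x * y = 0 ∨ IsZD (x + y)) ↔ x * y = 0)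

/-- Γ̃(R) = Z*(Γ(R)): distinct nonzero zero-divisors are adjacent in Γ̃(R) iff
they are adjacent in the total graph restricted to Z(R)*. -/
def TildeEqZStar (R : Type) [CommRing R] : Prop :=
  ∀ x y : R, IsZD x → x ≠ 0 → IsZD y → y ≠ 0 → x ≠ y →
    ((x * y = 0 ∨ IsZD (x + y)) ↔ IsZD (x + y))

/-
An element of a localization `S = M⁻¹R` with `M ≤ R⁰` is a unit multiple of the image of an
element of `R`, and two elements can be given a common denominator. Multiplying by a unit changes
neither zero-divisibility nor vanishing of products, and `R → S` is injective and reflects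
zero-divisors, so the implication "x + y ∈ Z ⇒ xy = 0" defining `Γ̃ = Γ` passes between `R` and `S`.
The total ring of fractions is the case `M = R⁰`.
-/

open nonZeroDivisors

variable {R : Type} [CommRing R]

theorem isZD_iff_notMem_nonZeroDivisors (x : R) : IsZD x ↔ x ∉ R⁰ := by
  simp only [IsZD, mem_nonZeroDivisors_iff_left, not_forall, exists_prop, and_comm]

theorem isZD_mul_isUnit_iff {x u : R} (hu : IsUnit u) : IsZD (x * u) ↔ IsZD x := by
  simp only [isZD_iff_notMem_nonZeroDivisors, mul_mem_nonZeroDivisors, hu.mem_nonZeroDivisors,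
    and_true]

theorem tildeEqGamma_iff :
    TildeEqGamma R ↔ ∀ x y : R, IsZD x → x ≠ 0 → IsZD y → y ≠ 0 → x ≠ y →
      IsZD (x + y) → x * y = 0 := by
  refine forall₂_congr fun x y ↦ ?_
  simp only [or_iff_left_iff_imp]

section Localization

variable {M : Submonoid R} (hM : M ≤ R⁰) {S : Type} [CommRing S] [Algebra R S]
  [IsLocalization M S]
include hM

theorem isZD_algebraMap_iff (x : R) : IsZD (algebraMap R S x) ↔ IsZD x := by
  constructor
  · rintro ⟨w, hw, hxw⟩
    obtain ⟨⟨b, d⟩, hb⟩ := IsLocalization.surj M w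
    have hd : IsUnit (algebraMap R S d) := IsLocalization.map_units S d
    refine ⟨b, fun hb0 ↦ hw ?_, ?_⟩
    · rwa [hb0, map_zero, hd.mul_left_eq_zero] at hb
    · rw [← IsLocalization.to_map_eq_zero_iff S hM, map_mul, ← hb, ← mul_assoc, hxw, zero_mul]
  · rintro ⟨y, hy, hxy⟩
    exact ⟨algebraMap R S y, mt (IsLocalization.to_map_eq_zero_iff S hM).1 hy,
      by rw [← map_mul, hxy, map_zero]⟩

theorem TildeEqGamma.isLocalization (h : TildeEqGamma R) : TildeEqGamma S := by
  rw [tildeEqGamma_iff] at h ⊢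
  intro p q hp hp0 hq hq0 hpq hpq_add
  obtain ⟨a, b, d, ha, hb⟩ := IsLocalization.surj₂ M S p q
  have hd : IsUnit (algebraMap R S d) := IsLocalization.map_units S d
  have isZD_of {z : S} {c : R} (hz : IsZD z) (hc : z * algebraMap R S d = algebraMap R S c) :
      IsZD c := by
    rwa [← isZD_algebraMap_iff hM (S := S), ← hc, isZD_mul_isUnit_iff hd]
  have ne_zero_of {z : S} {c : R} (hz : z ≠ 0) (hc : z * algebraMap R S d = algebraMap R S c) :
      c ≠ 0 := by
    rwa [Ne, ← IsLocalization.to_map_eq_zero_iff S hM, ← hc, hd.mul_left_eq_zero]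
  have hab : a ≠ b := by
    rintro rfl
    exact hpq (hd.mul_left_inj.1 (ha.trans hb.symm))
  have hab_add : algebraMap R S (a + b) = (p + q) * algebraMap R S d := by
    rw [map_add, ← ha, ← hb, add_mul]
  have hab_mul : a * b = 0 :=
    h a b (isZD_of hp ha) (ne_zero_of hp0 ha) (isZD_of hq hb) (ne_zero_of hq0 hb) hab
      (isZD_of hpq_add hab_add.symm)
  have hpq_mul : p * q * (algebraMap R S d * algebraMap R S d) = 0 := by
    rw [mul_mul_mul_comm, ha, hb, ← map_mul, hab_mul, map_zero]
  exact (hd.mul hd).mul_left_eq_zero.1 hpq_mul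

theorem TildeEqGamma.of_isLocalization (h : TildeEqGamma S) : TildeEqGamma R := by
  rw [tildeEqGamma_iff] at h ⊢
  intro x y hx hx0 hy hy0 hxy hxy_add
  have hinj := IsLocalization.injective S hM
  rw [← isZD_algebraMap_iff hM (S := S)] at hx hy hxy_add
  rw [Ne, ← IsLocalization.to_map_eq_zero_iff S hM] at hx0 hy0
  rw [← IsLocalization.to_map_eq_zero_iff S hM, map_mul]
  exact h _ _ hx hx0 hy hy0 (hinj.ne hxy) (by rwa [← map_add])

theorem tildeEqGamma_iff_of_isLocalization : TildeEqGamma R ↔ TildeEqGamma S :=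
  ⟨TildeEqGamma.isLocalization hM, TildeEqGamma.of_isLocalization hM⟩

end Localization

theorem stmt8_general (R : Type) [CommRing R] :
    TildeEqGamma R ↔ TildeEqGamma (FractionRing R) :=
  tildeEqGamma_iff_of_isLocalization le_rfl

theorem stmt8 (R : Type) [CommRing R] [Nontrivial R] :
    TildeEqGamma R ↔ TildeEqGamma (FractionRing R) :=
  stmt8_general R
end

section
/- For a commutative ring R with 1 ≠ 0, Γ̃(R) = Γ(R) if and only if either R ≅ ℤ₂ × ℤ₂ or xy = 0 for all x, y ∈ Z(R). -/
section ZModTwo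

lemma nonempty_ringEquiv_zmod_two {S : Type*} [CommRing S] [Nontrivial S]
    (h : ∀ s : S, s = 0 ∨ s = 1) : Nonempty (S ≃+* ZMod 2) := by
  have two_eq_zero : (2 : S) = 0 := (h 2).resolve_right fun h2 =>
    one_ne_zero (by linear_combination h2 : (1 : S) = 0)
  have : CharP S 2 := (CharP.charP_iff_prime_eq_zero Nat.prime_two).2 two_eq_zero
  have surj : Function.Surjective (ZMod.castHom (dvd_refl 2) S) := fun s => by
    rcases h s with rfl | rfl
    exacts [⟨0, map_zero _⟩, ⟨1, map_one _⟩]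
  exact ⟨(RingEquiv.ofBijective _ ⟨ZMod.castHom_injective S, surj⟩).symm⟩

variable {R : Type*} [CommRing R] {e : R}

lemma nonempty_quotient_span_singleton_ringEquiv_zmod_two (he : IsIdempotentElem e)
    (h1e : 1 - e ≠ 0) (hsmall : ∀ x : R, (1 - e) * x = 0 ∨ (1 - e) * x = 1 - e) :
    Nonempty (R ⧸ Ideal.span {e} ≃+* ZMod 2) := by
  have : Nontrivial (R ⧸ Ideal.span {e}) := by
    refine Ideal.Quotient.nontrivial_iff.2 fun htop => h1e ?_
    rw [(IsIdempotentElem.iff_eq_one_of_isUnit (Ideal.span_singleton_eq_top.1 htop)).1 he,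
      sub_self]
  refine nonempty_ringEquiv_zmod_two (Ideal.Quotient.mk_surjective.forall.2 fun x => ?_)
  have hx : Ideal.Quotient.mk (Ideal.span {e}) x = Ideal.Quotient.mk _ ((1 - e) * x) :=
    Ideal.Quotient.eq.2 (Ideal.mem_span_singleton'.2 ⟨x, by ring⟩)
  have h1 : Ideal.Quotient.mk (Ideal.span {e}) (1 - e) = 1 := by
    rw [map_sub, map_one, Ideal.Quotient.eq_zero_iff_mem.2 (Ideal.mem_span_singleton_self e),
      sub_zero]
  rcases hsmall x with h | h <;> rw [hx, h]
  exacts [Or.inl (map_zero _), Or.inr h1]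

lemma nonempty_ringEquiv_zmod_two_prod_of_isIdempotentElem (he : IsIdempotentElem e)
    (he0 : e ≠ 0) (h1e : 1 - e ≠ 0) (hsmall : ∀ x : R, e * x = 0 ∨ e * x = e)
    (hsmall' : ∀ x : R, (1 - e) * x = 0 ∨ (1 - e) * x = 1 - e) :
    Nonempty (R ≃+* ZMod 2 × ZMod 2) := by
  obtain ⟨φ⟩ := nonempty_quotient_span_singleton_ringEquiv_zmod_two he h1e hsmall'
  obtain ⟨ψ⟩ := nonempty_quotient_span_singleton_ringEquiv_zmod_two he.one_sub
    (by rwa [sub_sub_cancel]) (by simpa only [sub_sub_cancel] using hsmall)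
  have hbij := RingHom.prod_bijective_of_isIdempotentElem he he.one_sub (add_sub_cancel e 1)
    (by linear_combination -he.eq)
  exact ⟨(RingEquiv.ofBijective _ hbij).trans (φ.prodCongr ψ)⟩

end ZModTwo

namespace TildeEqGamma

variable {R : Type} [CommRing R]

lemma mul_eq_zero (h : TildeEqGamma R) {x y : R} (hx : IsZD x) (hx0 : x ≠ 0) (hy : IsZD y)
    (hy0 : y ≠ 0) (hxy : x ≠ y) (hsum : IsZD (x + y)) : x * y = 0 :=
  (h x y hx hx0 hy hy0 hxy).1 (Or.inr hsum)

lemma exists_isZD_mul_self_ne_zero (h : TildeEqGamma R) {a b : R} (ha : IsZD a) (hb : IsZD b)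
    (hab : a * b ≠ 0) : ∃ x : R, IsZD x ∧ x * x ≠ 0 := by
  by_contra! hsq
  have ha2 := hsq a ha
  have hb2 := hsq b hb
  have ha0 : a ≠ 0 := by rintro rfl; simp at hab
  have hb0 : b ≠ 0 := by rintro rfl; simp at hab
  have hne : a ≠ b := by rintro rfl; exact hab ha2
  exact hab <|
    h.mul_eq_zero ha ha0 hb hb0 hne ⟨a * b, hab, by linear_combination b * ha2 + a * hb2⟩

variable {a : R}

lemma add_self_eq_zero (h : TildeEqGamma R) (ha : IsZD a) (ha2 : a * a ≠ 0) : a + a = 0 := by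
  obtain ⟨c, hc0, hac⟩ := ha
  have ha0 : a ≠ 0 := by rintro rfl; simp at ha2
  by_contra h2a
  have hne : a ≠ -a := fun hh => h2a (by linear_combination hh)
  have := h.mul_eq_zero ⟨c, hc0, hac⟩ ha0 ⟨c, hc0, by linear_combination -hac⟩
    (neg_ne_zero.2 ha0) hne ⟨c, hc0, by simp⟩
  exact ha2 (by linear_combination -this)

lemma isIdempotentElem (h : TildeEqGamma R) (ha : IsZD a) (ha2 : a * a ≠ 0) :
    IsIdempotentElem a := by
  have h2a := h.add_self_eq_zero ha ha2
  obtain ⟨c, hc0, hac⟩ := ha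
  have ha0 : a ≠ 0 := by rintro rfl; simp at ha2
  by_contra hne
  change a * a ≠ a at hne
  have hcube : a * (a * a) = 0 :=
    h.mul_eq_zero ⟨c, hc0, hac⟩ ha0 ⟨c, hc0, by linear_combination a * hac⟩ ha2
      (Ne.symm hne) ⟨c, hc0, by linear_combination (1 + a) * hac⟩
  have := h.mul_eq_zero (y := a + a * a) ⟨c, hc0, hac⟩ ha0
    ⟨c, hc0, by linear_combination (1 + a) * hac⟩
    (fun hh => hne (by linear_combination hh - h2a)) (fun hh => ha2 (by linear_combination -hh))
    ⟨c, hc0, by linear_combination (2 + a) * hac⟩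
  exact ha2 (by linear_combination this - hcube)

lemma mul_eq_zero_or_eq_self (h : TildeEqGamma R) {e f : R} (he : IsIdempotentElem e)
    (he0 : e ≠ 0) (hf0 : f ≠ 0) (hef : e * f = 0) (x : R) : e * x = 0 ∨ e * x = e := by
  by_contra! hx
  obtain ⟨hx0, hxe⟩ := hx
  have := h.mul_eq_zero ⟨f, hf0, hef⟩ he0 ⟨f, hf0, by linear_combination x * hef⟩ hx0
    (Ne.symm hxe) ⟨f, hf0, by linear_combination (1 + x) * hef⟩
  exact hx0 (by linear_combination this - x * he.eq)

lemma nonempty_ringEquiv_zmod_two_prod (h : TildeEqGamma R) (ha : IsZD a) (ha2 : a * a ≠ 0) :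
    Nonempty (R ≃+* ZMod 2 × ZMod 2) := by
  have he := h.isIdempotentElem ha ha2
  have ha0 : a ≠ 0 := by rintro rfl; simp at ha2
  have h1a : 1 - a ≠ 0 := by
    obtain ⟨c, hc0, hac⟩ := ha
    intro hh
    exact hc0 (by linear_combination hac + c * hh)
  have haf : a * (1 - a) = 0 := by linear_combination -he.eq
  exact nonempty_ringEquiv_zmod_two_prod_of_isIdempotentElem he ha0 h1a
    (h.mul_eq_zero_or_eq_self he ha0 h1a haf)
    (h.mul_eq_zero_or_eq_self he.one_sub h1a ha0 (by rwa [mul_comm]))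

lemma of_mul_eq_zero
    (h : ∀ x y : R, IsZD x → x ≠ 0 → IsZD y → y ≠ 0 → x ≠ y → x * y = 0) : TildeEqGamma R :=
  fun x y hx hx0 hy hy0 hxy => ⟨fun _ => h x y hx hx0 hy hy0 hxy, Or.inl⟩

end TildeEqGamma

lemma IsZD.map {R S : Type} [CommRing R] [CommRing S] (φ : R ≃+* S) {x : R} (hx : IsZD x) :
    IsZD (φ x) := by
  obtain ⟨c, hc0, hxc⟩ := hx
  exact ⟨φ c, (map_ne_zero_iff φ φ.injective).2 hc0, by rw [← map_mul, hxc, map_zero]⟩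

lemma tildeEqGamma_of_ringEquiv_zmod_two_prod {R : Type} [CommRing R]
    (φ : R ≃+* ZMod 2 × ZMod 2) : TildeEqGamma R := by
  have key : ∀ u v : ZMod 2 × ZMod 2, IsZD u → u ≠ 0 → IsZD v → v ≠ 0 → u ≠ v → u * v = 0 := by
    unfold IsZD; decide
  refine TildeEqGamma.of_mul_eq_zero fun x y hx hx0 hy hy0 hxy => φ.injective ?_
  rw [map_mul, map_zero]
  exact key _ _ (hx.map φ) ((map_ne_zero_iff φ φ.injective).2 hx0) (hy.map φ)
    ((map_ne_zero_iff φ φ.injective).2 hy0) (φ.injective.ne hxy)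

theorem stmt11_general (R : Type) [CommRing R] :
    TildeEqGamma R ↔
      (Nonempty (R ≃+* ZMod 2 × ZMod 2) ∨ ∀ x y : R, IsZD x → IsZD y → x * y = 0) := by
  constructor
  · intro h
    by_cases hall : ∀ x y : R, IsZD x → IsZD y → x * y = 0
    · exact Or.inr hall
    push Not at hall
    obtain ⟨a, b, ha, hb, hab⟩ := hall
    obtain ⟨x, hx, hx2⟩ := h.exists_isZD_mul_self_ne_zero ha hb hab
    exact Or.inl (h.nonempty_ringEquiv_zmod_two_prod hx hx2)
  · rintro (hφ | hall)
    · exact tildeEqGamma_of_ringEquiv_zmod_two_prod hφ.some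
    · exact TildeEqGamma.of_mul_eq_zero fun x y hx _ hy _ _ => hall x y hx hy

theorem stmt11 (R : Type) [CommRing R] [Nontrivial R] :
    TildeEqGamma R ↔
      (Nonempty (R ≃+* ZMod 2 × ZMod 2) ∨ ∀ x y : R, IsZD x → IsZD y → x * y = 0) :=
  stmt11_general R
end
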